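/- Ascending summability of the coefficients (Lemma B.1, point 1): For every (p₀,k₀) ∈ Q and every p ∈ P, Σ_{k∈D_p, k ≤ k₀} c(p₀,k₀;p,k) ≤ ((I−H)^{-1})_{p₀,p}, where the left-hand side is a sum in [0,∞] over the countable set D_p ∩ (−∞,k₀]. -/

import Mathlib

/-!
Let `B = (1 - H)⁻¹ = ∑ Hⁿ`: the series converges by Gelfand's formula, so `B` has nonnegative
entries and `B = 1 + H B`. Truncate the sum below at some level `u` and argue by strong induction on
the (finite) number of grid points in `(u, k₀]`. The term `k = k₀` contributes `δ_{p₀ p}`. For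
`k < k₀`, unfolding the recursion and exchanging the two sums turns the rest into
`∑_{p''} ∑_{u < k'' < k₀} a h (k₀ - k'') ∑_{u < k ≤ k''} c(p'', k''; p, k)`; the inner sums are at
most `B_{p'' p}` by induction, and the kernel sums at most `H_{p₀ p''}` because `D_{p''}` is a
translate of `ℤ / n_{p''}`. So the truncated sum is at most `(1 + H B)_{p₀ p} = B_{p₀ p}`, uniformly
in `u`. All sums are taken in `ℝ≥0∞`, where they may be exchanged freely.
-/

open Set Filter
open scoped ENNReal

theorem summable_pow_of_spectralRadius_lt_one {A : Type*} [NormedRing A] [NormedAlgebra ℂ A]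
    [CompleteSpace A] {a : A} (ha : spectralRadius ℂ a < 1) : Summable fun n : ℕ => a ^ n := by
  obtain ⟨r, hρr, hr1⟩ := ENNReal.lt_iff_exists_nnreal_btwn.mp ha
  have hgelfand := spectrum.pow_norm_pow_one_div_tendsto_nhds_spectralRadius a
  have hpow : ∀ᶠ n : ℕ in atTop, ‖a ^ n‖ ≤ (r : ℝ) ^ n := by
    filter_upwards [hgelfand.eventually_lt_const hρr, eventually_gt_atTop 0] with n hn hn0
    rw [ENNReal.ofReal_lt_iff_lt_toReal (by positivity) ENNReal.coe_ne_top, ENNReal.coe_toReal,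
      one_div] at hn
    rw [← Real.rpow_natCast]
    exact ((Real.rpow_inv_lt_iff_of_pos (norm_nonneg _) r.2 (Nat.cast_pos.mpr hn0)).mp hn).le
  exact .of_norm_bounded_eventually_nat (summable_geometric_of_lt_one r.2 (mod_cast hr1)) hpow

theorem eq_one_add_mul_of_hasSum_pow {R : Type*} [Ring R] [TopologicalSpace R]
    [IsTopologicalRing R] [T2Space R] {x s : R} (hs : HasSum (fun n : ℕ => x ^ n) s) :
    s = 1 + x * s := by
  have hshift : HasSum (fun n : ℕ => x * x ^ n) (s - 1) := by
    simpa [pow_succ'] using (hasSum_nat_add_iff' 1).mpr hs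
  rw [← hshift.unique (hs.mul_left x), add_sub_cancel]

section Neumann

-- Any Banach algebra norm will do here: the spectral radius does not depend on it.
attribute [local instance] Matrix.linftyOpNormedRing Matrix.linftyOpNormedAlgebra

variable {P : Type*} [Fintype P] [DecidableEq P]

theorem Matrix.hasSum_pow_of_spectralRadius_lt_one {H : Matrix P P ℝ}
    (hH : spectralRadius ℂ (H.map (algebraMap ℝ ℂ)) < 1) :
    HasSum (fun n : ℕ => H ^ n) (1 - H)⁻¹ := by
  have hC := (summable_pow_of_spectralRadius_lt_one hH).map
    (Complex.reAddGroupHom.mapMatrix (m := P) (n := P))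
    (continuous_id.matrix_map Complex.continuous_re)
  obtain ⟨T, hT⟩ : Summable fun n : ℕ => H ^ n := by
    convert hC using 2 with n
    rw [Function.comp_apply, ← Matrix.map_pow]
    ext p q
    simp
  have hinv : (1 - H) * T = 1 := by
    rw [sub_mul, one_mul, sub_eq_iff_eq_add, ← eq_one_add_mul_of_hasSum_pow hT]
  rwa [Matrix.inv_eq_right_inv hinv]

theorem Matrix.ofReal_inv_one_sub_apply {H : Matrix P P ℝ} (hH0 : ∀ p q, 0 ≤ H p q)
    (hH : spectralRadius ℂ (H.map (algebraMap ℝ ℂ)) < 1) (p q : P) :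
    ENNReal.ofReal ((1 - H)⁻¹ p q) =
      (if p = q then 1 else 0) + ∑ r, ENNReal.ofReal (H p r) * ENNReal.ofReal ((1 - H)⁻¹ r q) := by
  have hsum := Matrix.hasSum_pow_of_spectralRadius_lt_one hH
  have hinv0 : ∀ p q, 0 ≤ (1 - H)⁻¹ p q := fun p q =>
    (Pi.hasSum.mp (Pi.hasSum.mp hsum p) q).nonneg fun n => Matrix.pow_apply_nonneg hH0 n p q
  have hterm : ∀ r, 0 ≤ H p r * (1 - H)⁻¹ r q := fun r => mul_nonneg (hH0 p r) (hinv0 r q)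
  conv_lhs =>
    rw [eq_one_add_mul_of_hasSum_pow hsum, Matrix.add_apply, Matrix.one_apply, Matrix.mul_apply]
  rw [ENNReal.ofReal_add (by positivity) (Finset.sum_nonneg fun r _ => hterm r),
    ENNReal.ofReal_sum_of_nonneg fun r _ => hterm r]
  simp only [apply_ite ENNReal.ofReal, ENNReal.ofReal_one, ENNReal.ofReal_zero,
    ENNReal.ofReal_mul (hH0 p _)]

end Neumann

theorem ENNReal.ofReal_finsum_mem {α : Type*} {s : Set α} (hs : s.Finite) {f : α → ℝ}
    (hf : ∀ x ∈ s, 0 ≤ f x) : ENNReal.ofReal (∑ᶠ x ∈ s, f x) = ∑' x : s, ENNReal.ofReal (f x) := by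
  rw [finsum_mem_eq_finite_toFinset_sum _ hs,
    ENNReal.ofReal_sum_of_nonneg fun x hx => hf x (hs.mem_toFinset.mp hx), ← Finset.tsum_subtype]
  exact tsum_congr_set_coe (fun x => ENNReal.ofReal (f x)) hs.coe_toFinset

theorem tsum_inter_Ioo_tsum_inter_Ico_comm {α : Type*} [LinearOrder α] (S T : Set α) (u v : α)
    (f : α → α → ℝ≥0∞) :
    ∑' k : (S ∩ Ioo u v : Set α), ∑' l : (T ∩ Ico (k : α) v : Set α), f k l =
      ∑' l : (T ∩ Ioo u v : Set α), ∑' k : (S ∩ Ioc u (l : α) : Set α), f k l := by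
  have hpush : ∀ (s : Set α) (g : α → α → ℝ≥0∞) (k : α),
      s.indicator (fun k => ∑' l, g k l) k = ∑' l, s.indicator (fun k => g k l) k := by
    intro s g k
    by_cases hk : k ∈ s <;> simp [hk]
  rw [tsum_subtype (S ∩ Ioo u v) fun k => ∑' l : (T ∩ Ico k v : Set α), f k l,
    tsum_subtype (T ∩ Ioo u v) fun l => ∑' k : (S ∩ Ioc u l : Set α), f k l]
  have hinner : ∀ l, ∑' k : (S ∩ Ioc u l : Set α), f k l =
      ∑' k, (S ∩ Ioc u l).indicator (fun k => f k l) k := fun l => tsum_subtype _ (f · l)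
  simp only [tsum_subtype, hinner, hpush]
  rw [ENNReal.tsum_comm]
  refine tsum_congr fun l => tsum_congr fun k => ?_
  classical
  simp only [indicator_apply, mem_inter_iff, mem_Ioo, mem_Ico, mem_Ioc]
  split_ifs <;> grind

theorem Set.ncard_inter_Ioc_lt {α : Type*} [LinearOrder α] {G : Set α} {u l v : α}
    (hG : (G ∩ Ioc u v).Finite) (hv : v ∈ G) (huv : u < v) (hlv : l < v) :
    (G ∩ Ioc u l).ncard < (G ∩ Ioc u v).ncard := by
  refine Set.ncard_lt_ncard (ssubset_of_subset_not_subset ?_ fun h => ?_) hG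
  · exact inter_subset_inter_right _ (Ioc_subset_Ioc_right hlv.le)
  · exact hlv.not_ge (h ⟨hv, huv, le_rfl⟩).2.2

theorem tsum_inter_Iic_le_of_forall_Ioc {α : Type*} [LinearOrder α] [Nonempty α] [NoMinOrder α]
    {S : Set α} {f : α → ℝ≥0∞} {b : ℝ≥0∞} {v : α}
    (h : ∀ u, ∑' k : (S ∩ Ioc u v : Set α), f k ≤ b) : ∑' k : (S ∩ Iic v : Set α), f k ≤ b := by
  rw [tsum_subtype]
  refine tsum_le_of_sum_le' bot_le fun s => ?_
  obtain ⟨l, hl⟩ := s.bddBelow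
  obtain ⟨u, hu⟩ := exists_lt l
  calc ∑ k ∈ s, (S ∩ Iic v).indicator f k = ∑ k ∈ s, (S ∩ Ioc u v).indicator f k :=
        Finset.sum_congr rfl fun k hk => by
          have huk : u < k := hu.trans_le (hl hk)
          exact indicator_eq_indicator (by simp [huk]) rfl
    _ ≤ ∑' k, (S ∩ Ioc u v).indicator f k := ENNReal.sum_le_tsum _
    _ ≤ b := by rw [← tsum_subtype]; exact h u

theorem tsum_ofReal_mul_comp_sub_le {θ : ℝ} {m : ℕ} {S : Set ℝ}
    (hS : S = {k | ∃ j : ℤ, k = θ + (j : ℝ) / (m : ℝ)}) {A : ℝ} (hA : 0 ≤ A) (g : ℝ → ℝ) (x : ℝ) :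
    ∑' k : S, ENNReal.ofReal (A * g (x - k)) ≤
      ENNReal.ofReal A * ⨆ y : ℝ, ∑' j : ℤ, ENNReal.ofReal (g (y + (j : ℝ) / (m : ℝ))) := by
  simp only [ENNReal.ofReal_mul hA, ENNReal.tsum_mul_left]
  gcongr
  let e : ℤ → S := fun j => ⟨θ - (j : ℝ) / m, hS ▸ ⟨-j, by push_cast; ring⟩⟩
  have he : Function.Surjective e := by
    rintro ⟨k, hk⟩
    obtain ⟨j, rfl⟩ := hS ▸ hk
    exact ⟨-j, Subtype.ext (by simp [e]; ring)⟩
  refine (ENNReal.tsum_le_tsum_comp_of_surjective he _).trans (le_iSup_of_le (x - θ) ?_)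
  simp only [e, sub_sub_eq_add_sub, add_sub_right_comm]
  exact le_rfl

section Coefficients

variable {P : Type*} [Fintype P] {D : P → Set ℝ} {w : P → P → ℝ → ℝ}
  {c : P → ℝ → P → ℝ → ℝ}

theorem ofReal_coeff_eq_sum_tsum (hloc : ∀ u v, ((⋃ p, D p) ∩ Ioc u v).Finite)
    (hw : ∀ p p' x, 0 ≤ w p p' x)
    (hc_nonneg : ∀ p k p' k', k ∈ D p → k' ∈ D p' → k' ≤ k → 0 ≤ c p k p' k')
    (hc_rec : ∀ p k p' k', k ∈ D p → k' ∈ D p' → k' < k →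
      c p k p' k' = ∑ p'' : P, ∑ᶠ k'' ∈ D p'' ∩ Ico k' k, w p p'' (k - k'') * c p'' k'' p' k')
    {p p' : P} {k k' : ℝ} (hk : k ∈ D p) (hk' : k' ∈ D p') (hlt : k' < k) :
    ENNReal.ofReal (c p k p' k') = ∑ p'' : P, ∑' l : (D p'' ∩ Ico k' k : Set ℝ),
      ENNReal.ofReal (w p p'' (k - l)) * ENNReal.ofReal (c p'' l p' k') := by
  have hfin : ∀ p'', (D p'' ∩ Ico k' k).Finite := fun p'' =>
    (hloc (k' - 1) k).subset fun x ⟨hx, hx1, hx2⟩ =>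
      ⟨mem_iUnion.mpr ⟨p'', hx⟩, by linarith, hx2.le⟩
  have hterm : ∀ p'', ∀ l ∈ D p'' ∩ Ico k' k, 0 ≤ w p p'' (k - l) * c p'' l p' k' :=
    fun p'' l ⟨hl, hkl, _⟩ => mul_nonneg (hw _ _ _) (hc_nonneg _ _ _ _ hl hk' hkl)
  rw [hc_rec p k p' k' hk hk' hlt, ENNReal.ofReal_sum_of_nonneg fun p'' _ =>
    finsum_nonneg fun l => finsum_nonneg fun hl => hterm p'' l hl]
  refine Finset.sum_congr rfl fun p'' _ => ?_
  rw [ENNReal.ofReal_finsum_mem (hfin p'') (hterm p'')]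
  exact tsum_congr fun l => ENNReal.ofReal_mul (hw _ _ _)

theorem tsum_ofReal_coeff_Ioo_le (hloc : ∀ u v, ((⋃ p, D p) ∩ Ioc u v).Finite)
    (hw : ∀ p p' x, 0 ≤ w p p' x)
    (hc_nonneg : ∀ p k p' k', k ∈ D p → k' ∈ D p' → k' ≤ k → 0 ≤ c p k p' k')
    (hc_rec : ∀ p k p' k', k ∈ D p → k' ∈ D p' → k' < k →
      c p k p' k' = ∑ p'' : P, ∑ᶠ k'' ∈ D p'' ∩ Ico k' k, w p p'' (k - k'') * c p'' k'' p' k')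
    {K B : P → P → ℝ≥0∞}
    (hK : ∀ p p'' x, ∑' l : D p'', ENNReal.ofReal (w p p'' (x - l)) ≤ K p p'')
    {u k₀ : ℝ} {p₀ : P} (hk₀ : k₀ ∈ D p₀)
    (ih : ∀ p'', ∀ l ∈ D p'' ∩ Ioo u k₀, ∀ p,
      ∑' k : (D p ∩ Ioc u l : Set ℝ), ENNReal.ofReal (c p'' l p k) ≤ B p'' p) (p : P) :
    ∑' k : (D p ∩ Ioo u k₀ : Set ℝ), ENNReal.ofReal (c p₀ k₀ p k) ≤ ∑ p'', K p₀ p'' * B p'' p := by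
  calc ∑' k : (D p ∩ Ioo u k₀ : Set ℝ), ENNReal.ofReal (c p₀ k₀ p k)
      = ∑' k : (D p ∩ Ioo u k₀ : Set ℝ), ∑ p'', ∑' l : (D p'' ∩ Ico (k : ℝ) k₀ : Set ℝ),
          ENNReal.ofReal (w p₀ p'' (k₀ - l)) * ENNReal.ofReal (c p'' l p k) :=
        tsum_congr fun k => ofReal_coeff_eq_sum_tsum hloc hw hc_nonneg hc_rec hk₀ k.2.1 k.2.2.2
    _ = ∑ p'', ∑' l : (D p'' ∩ Ioo u k₀ : Set ℝ), ∑' k : (D p ∩ Ioc u (l : ℝ) : Set ℝ),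
          ENNReal.ofReal (w p₀ p'' (k₀ - l)) * ENNReal.ofReal (c p'' l p k) := by
        rw [Summable.tsum_finsetSum fun _ _ => ENNReal.summable]
        exact Finset.sum_congr rfl fun p'' _ => tsum_inter_Ioo_tsum_inter_Ico_comm _ _ _ _
          fun k l => ENNReal.ofReal (w p₀ p'' (k₀ - l)) * ENNReal.ofReal (c p'' l p k)
    _ ≤ ∑ p'', ∑' l : (D p'' ∩ Ioo u k₀ : Set ℝ), ENNReal.ofReal (w p₀ p'' (k₀ - l)) * B p'' p := by
        simp only [ENNReal.tsum_mul_left]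
        gcongr with p'' _ l
        exact ih p'' l l.2 p
    _ ≤ ∑ p'', K p₀ p'' * B p'' p := by
        simp only [ENNReal.tsum_mul_right]
        gcongr with p''
        exact (ENNReal.tsum_mono_subtype (fun l => ENNReal.ofReal (w p₀ p'' (k₀ - l)))
          inter_subset_left).trans (hK p₀ p'' k₀)

theorem tsum_ofReal_coeff_Ioc_le [DecidableEq P] (hloc : ∀ u v, ((⋃ p, D p) ∩ Ioc u v).Finite)
    (hw : ∀ p p' x, 0 ≤ w p p' x)
    (hc_nonneg : ∀ p k p' k', k ∈ D p → k' ∈ D p' → k' ≤ k → 0 ≤ c p k p' k')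
    (hc_diag : ∀ p p' k, k ∈ D p → k ∈ D p' → c p k p' k = if p = p' then 1 else 0)
    (hc_rec : ∀ p k p' k', k ∈ D p → k' ∈ D p' → k' < k →
      c p k p' k' = ∑ p'' : P, ∑ᶠ k'' ∈ D p'' ∩ Ico k' k, w p p'' (k - k'') * c p'' k'' p' k')
    {K B : P → P → ℝ≥0∞}
    (hK : ∀ p p'' x, ∑' l : D p'', ENNReal.ofReal (w p p'' (x - l)) ≤ K p p'')
    (hB : ∀ p q, (if p = q then 1 else 0) + ∑ r, K p r * B r q ≤ B p q)
    (u : ℝ) {k₀ : ℝ} {p₀ : P} (hk₀ : k₀ ∈ D p₀) (p : P) :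
    ∑' k : (D p ∩ Ioc u k₀ : Set ℝ), ENNReal.ofReal (c p₀ k₀ p k) ≤ B p₀ p := by
  induction hN : ((⋃ p, D p) ∩ Ioc u k₀).ncard using Nat.strong_induction_on
    generalizing k₀ p₀ p with
  | _ N ih =>
  have hdiag : ∑' k : (D p ∩ {k₀} : Set ℝ), ENNReal.ofReal (c p₀ k₀ p k) ≤
      if p₀ = p then 1 else 0 := by
    by_cases hp : k₀ ∈ D p
    · rw [inter_eq_right.mpr (singleton_subset_iff.mpr hp),
        tsum_singleton k₀ fun k => ENNReal.ofReal (c p₀ k₀ p k), hc_diag _ _ _ hk₀ hp]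
      split_ifs <;> simp
    · simp [inter_singleton_eq_empty.mpr hp]
  have hlower : ∀ p'', ∀ l ∈ D p'' ∩ Ioo u k₀, ∀ p,
      ∑' k : (D p ∩ Ioc u l : Set ℝ), ENNReal.ofReal (c p'' l p k) ≤ B p'' p :=
    fun p'' l ⟨hl, hul, hlk⟩ p => ih _ (hN ▸ ncard_inter_Ioc_lt (hloc u k₀)
      (mem_iUnion_of_mem p₀ hk₀) (hul.trans hlk) hlk) hl p rfl
  calc ∑' k : (D p ∩ Ioc u k₀ : Set ℝ), ENNReal.ofReal (c p₀ k₀ p k)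
      ≤ ∑' k : (D p ∩ Ioo u k₀ ∪ D p ∩ {k₀} : Set ℝ), ENNReal.ofReal (c p₀ k₀ p k) := by
        refine ENNReal.tsum_mono_subtype (fun k => ENNReal.ofReal (c p₀ k₀ p k)) ?_
        rintro k ⟨hk, huk, hkk⟩
        rcases hkk.lt_or_eq with hlt | rfl
        exacts [Or.inl ⟨hk, huk, hlt⟩, Or.inr ⟨hk, rfl⟩]
    _ ≤ (∑ r, K p₀ r * B r p) + if p₀ = p then 1 else 0 :=
        (ENNReal.tsum_union_le (fun k => ENNReal.ofReal (c p₀ k₀ p k)) _ _).trans (add_le_add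
          (tsum_ofReal_coeff_Ioo_le hloc hw hc_nonneg hc_rec hK hk₀ hlower p) hdiag)
    _ ≤ B p₀ p := by rw [add_comm]; exact hB p₀ p

end Coefficients

theorem stmt_4_general
    {P : Type*} [Fintype P] [DecidableEq P]
    (n : P → ℕ)
    (θ : P → ℝ)
    (D : P → Set ℝ)
    (hD : ∀ p, D p = {k : ℝ | ∃ j : ℤ, k = θ p + (j : ℝ) / (n p : ℝ)})
    (hfin : ∀ u v : ℝ, u < v → ((⋃ p, D p) ∩ Set.Ioc u v).Finite)
    (a : P → P → ℝ) (ha : ∀ p p', 0 ≤ a p p')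
    (h : P → P → ℝ → ℝ) (hh : ∀ p p' x, 0 ≤ h p p' x)
    -- the coefficients `c(p,k;p',k')`, characterized by the well-founded recursion
    (co : P → ℝ → P → ℝ → ℝ)
    (hco_nonneg : ∀ p k p' k', k ∈ D p → k' ∈ D p' → k' ≤ k → 0 ≤ co p k p' k')
    (hco_diag : ∀ p p' k, k ∈ D p → k ∈ D p' → co p k p' k = if p = p' then 1 else 0)
    (hco_rec : ∀ p k p' k', k ∈ D p → k' ∈ D p' → k' < k →
      co p k p' k' = ∑ p'' : P, ∑ᶠ k'' ∈ D p'' ∩ Set.Ico k' k,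
        a p p'' * h p p'' (k - k'') * co p'' k'' p' k')
    -- the matrix `H` of the interaction norms: its entries are finite reals
    (Hm : Matrix P P ℝ) (hHm0 : ∀ p p', 0 ≤ Hm p p')
    (hHm : ∀ p p', ENNReal.ofReal (Hm p p') =
      ENNReal.ofReal (a p p') *
        ⨆ x : ℝ, ∑' j : ℤ, ENNReal.ofReal (h p p' (x + (j : ℝ) / (n p' : ℝ))))
    -- the spectral radius of `H` is strictly less than 1
    (hspec : spectralRadius ℂ (Hm.map (algebraMap ℝ ℂ)) < 1) :
    ∀ (p₀ : P) (k₀ : ℝ), k₀ ∈ D p₀ → ∀ p : P,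
      ∑' k : (D p ∩ Set.Iic k₀ : Set ℝ), ENNReal.ofReal (co p₀ k₀ p (k : ℝ)) ≤
        ENNReal.ofReal ((1 - Hm)⁻¹ p₀ p) := by
  intro p₀ k₀ hk₀ p
  have hloc : ∀ u v, ((⋃ p, D p) ∩ Ioc u v).Finite := fun u v =>
    (lt_or_ge u v).elim (hfin u v) fun hvu => by simp [Ioc_eq_empty_of_le hvu]
  have hK : ∀ p p'' x, ∑' l : D p'', ENNReal.ofReal (a p p'' * h p p'' (x - l)) ≤
      ENNReal.ofReal (Hm p p'') := fun p p'' x =>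
    (hHm p p'').symm ▸ tsum_ofReal_mul_comp_sub_le (hD p'') (ha p p'') (h p p'') x
  have hB : ∀ p q, (if p = q then 1 else 0) +
      ∑ r, ENNReal.ofReal (Hm p r) * ENNReal.ofReal ((1 - Hm)⁻¹ r q) ≤
        ENNReal.ofReal ((1 - Hm)⁻¹ p q) := fun p q =>
    (Matrix.ofReal_inv_one_sub_apply hHm0 hspec p q).ge
  exact tsum_inter_Iic_le_of_forall_Ioc (f := fun k => ENNReal.ofReal (co p₀ k₀ p k)) fun u =>
    tsum_ofReal_coeff_Ioc_le (w := fun p p' x => a p p' * h p p' x) hloc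
      (fun p p' x => mul_nonneg (ha p p') (hh p p' x)) hco_nonneg hco_diag hco_rec hK hB u hk₀ p

/-- **Lemma B.1, point 1.** Ascending summability of the coefficients. -/
theorem stmt_4
    {P : Type*} [Fintype P] [Nonempty P] [DecidableEq P]
    (n : P → ℕ) (hn : ∀ p, 1 ≤ n p)
    (θ : P → ℝ) (hθ0 : ∀ p, 0 ≤ θ p) (hθ1 : ∀ p, θ p < 1 / (n p : ℝ))
    (D : P → Set ℝ)
    (hD : ∀ p, D p = {k : ℝ | ∃ j : ℤ, k = θ p + (j : ℝ) / (n p : ℝ)})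
    (hfin : ∀ u v : ℝ, u < v → ((⋃ p, D p) ∩ Set.Ioc u v).Finite)
    (a : P → P → ℝ) (ha : ∀ p p', 0 ≤ a p p')
    (h : P → P → ℝ → ℝ) (hh : ∀ p p' x, 0 ≤ h p p' x)
    (hh0 : ∀ p p' x, x ≤ 0 → h p p' x = 0)
    -- the coefficients `c(p,k;p',k')`, characterized by the well-founded recursion
    (co : P → ℝ → P → ℝ → ℝ)
    (hco_nonneg : ∀ p k p' k', k ∈ D p → k' ∈ D p' → k' ≤ k → 0 ≤ co p k p' k')
    (hco_diag : ∀ p p' k, k ∈ D p → k ∈ D p' → co p k p' k = if p = p' then 1 else 0)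
    (hco_rec : ∀ p k p' k', k ∈ D p → k' ∈ D p' → k' < k →
      co p k p' k' = ∑ p'' : P, ∑ᶠ k'' ∈ D p'' ∩ Set.Ico k' k,
        a p p'' * h p p'' (k - k'') * co p'' k'' p' k')
    -- the matrix `H` of the interaction norms: its entries are finite reals
    (Hm : Matrix P P ℝ) (hHm0 : ∀ p p', 0 ≤ Hm p p')
    (hHm : ∀ p p', ENNReal.ofReal (Hm p p') =
      ENNReal.ofReal (a p p') *
        ⨆ x : ℝ, ∑' j : ℤ, ENNReal.ofReal (h p p' (x + (j : ℝ) / (n p' : ℝ))))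
    -- the spectral radius of `H` is strictly less than 1
    (hspec : spectralRadius ℂ (Hm.map (algebraMap ℝ ℂ)) < 1) :
    ∀ (p₀ : P) (k₀ : ℝ), k₀ ∈ D p₀ → ∀ p : P,
      ∑' k : (D p ∩ Set.Iic k₀ : Set ℝ), ENNReal.ofReal (co p₀ k₀ p (k : ℝ)) ≤
        ENNReal.ofReal ((1 - Hm)⁻¹ p₀ p) :=
  stmt_4_general n θ D hD hfin a ha h hh co hco_nonneg hco_diag hco_rec Hm hHm0 hHm hspec
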